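/- arXiv:2204.10489 — 3 statements merged into one kernel-verified Lean document; each statement's English description precedes it below -/
import Mathlib

section
/- Suppose D_{m,ψ,φ} is bounded and J_w-symmetric on H²(β) with ψ not identically zero. Then ψ vanishes at 0: ψ(0) = 0. -/
open Complex Metric
open scoped InnerProductSpace ComplexConjugate

noncomputable section

/-- `H²(β)` modelled as `ℓ²`: an element `x` represents the analytic function with
Taylor coefficients `aₙ = x n / β n`, so that `‖x‖² = Σ |aₙ|² β(n)²`. -/
abbrev Hs : Type := lp (fun _ : ℕ => ℂ) 2

/-- The analytic function associated to an element with data `x` (coefficients `x n / β n`). -/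
def Fval (β : ℕ → ℝ) (x : ℕ → ℂ) (z : ℂ) : ℂ := ∑' n : ℕ, (x n / (β n : ℂ)) * z ^ n

/-- The conjugation `J_w` at the level of coefficient data: corresponds to
`(J_w f)(z) = conj (f (w * conj z))`, i.e. coefficients `conj aₙ * conj(w)ⁿ`. -/
def Jseq (w : ℂ) (x : ℕ → ℂ) : ℕ → ℂ := fun n => conj (x n) * (conj w) ^ n

/-- Data of the reproducing kernel `K_α(z) = Σ conj(α)ⁿ zⁿ / β(n)²`. -/
def kerSeq (β : ℕ → ℝ) (α : ℂ) : ℕ → ℂ := fun n => (conj α) ^ n / (β n : ℂ)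

/-- Data of the derivative kernel `K_α^{[m]}(z) = Σ_{n≥m} (n!/(n−m)!) conj(α)^{n−m} zⁿ / β(n)²`. -/
def kerDSeq (β : ℕ → ℝ) (m : ℕ) (α : ℂ) : ℕ → ℂ := fun n =>
  if m ≤ n then (n.factorial / (n - m).factorial : ℂ) * (conj α) ^ (n - m) / (β n : ℂ) else 0

/-- Standing assumptions on the weight sequence `β`. -/
def WeightOK (β : ℕ → ℝ) : Prop :=
  (∀ n, 0 < β n) ∧ β 0 = 1 ∧ 1 ≤ Filter.atTop.liminf (fun n : ℕ => (β n) ^ ((1:ℝ)/(n:ℝ)))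

/-- `φ` is an analytic self-map of the unit disc. -/
def SelfMapD (φ : ℂ → ℂ) : Prop :=
  AnalyticOnNhd ℂ φ (ball 0 1) ∧ ∀ z ∈ ball (0:ℂ) 1, φ z ∈ ball (0:ℂ) 1

/-- `T` acts as the generalized weighted composition operator
`D_{m,ψ,φ} f (z) = ψ(z) f^{(m)}(φ(z))` on the disc. -/
def IsGWCO (β : ℕ → ℝ) (m : ℕ) (ψ φ : ℂ → ℂ) (T : Hs →L[ℂ] Hs) : Prop :=
  ∀ (x : Hs), ∀ z ∈ ball (0:ℂ) 1, Fval β (T x) z = ψ z * iteratedDeriv m (Fval β x) (φ z)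

/-! Since `m ≥ 1`, `D_{m,ψ,φ}` kills the constant function `1`. As `J_w 1 = 1` and `J_w` is
injective, `J_w`-symmetry then gives `D_{m,ψ,φ}* 1 = 0`: every function in the range of
`D_{m,ψ,φ}` vanishes at `0`. Applied to `zᵐ`, whose image takes the value `ψ(0) m! / β(m)`
at `0`, this forces `ψ(0) = 0`. -/

open Filter FormalMultilinearSeries

lemma WeightOK.eventually_pow_le {β : ℕ → ℝ} (hβ : WeightOK β) {s : ℝ} (hs₀ : 0 ≤ s)
    (hs₁ : s < 1) : ∀ᶠ n in atTop, s ^ n ≤ β n := by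
  have hbdd : IsBoundedUnder (· ≥ ·) atTop fun n : ℕ => β n ^ ((1 : ℝ) / n) :=
    isBoundedUnder_of ⟨0, fun n => Real.rpow_nonneg (hβ.1 n).le _⟩
  filter_upwards [eventually_lt_of_lt_liminf (hs₁.trans_le hβ.2.2) hbdd,
    eventually_ne_atTop 0] with n hn hn₀
  calc s ^ n ≤ (β n ^ ((1 : ℝ) / n)) ^ n := pow_le_pow_left₀ hs₀ hn.le n
    _ = β n := by rw [one_div, Real.rpow_inv_natCast_pow (hβ.1 n).le hn₀]

lemma WeightOK.one_le_radius {β : ℕ → ℝ} (hβ : WeightOK β) {x : ℕ → ℂ} {C : ℝ}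
    (hx : ∀ n, ‖x n‖ ≤ C) : 1 ≤ (ofScalars ℂ fun n => x n / β n).radius := by
  refine ENNReal.le_of_forall_nnreal_lt fun r hr => ?_
  refine le_radius_of_eventually_le _ C ?_
  filter_upwards [hβ.eventually_pow_le r.coe_nonneg (by exact_mod_cast hr)] with n hn
  have hβn := hβ.1 n
  rw [ofScalars_norm, norm_div, Complex.norm_real, Real.norm_of_nonneg hβn.le,
    div_mul_eq_mul_div, div_le_iff₀ hβn]
  have hC : 0 ≤ C := (norm_nonneg _).trans (hx 0)
  exact mul_le_mul (hx n) hn (by positivity) hC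

lemma WeightOK.hasFPowerSeriesAt_Fval {β : ℕ → ℝ} (hβ : WeightOK β) (x : Hs) :
    HasFPowerSeriesAt (Fval β x) (ofScalars ℂ fun n => x n / β n) 0 := by
  have hrad := hβ.one_le_radius fun n => lp.norm_apply_le_norm (by norm_num) x n
  have hsum : (ofScalars ℂ fun n => x n / β n).sum = Fval β x := by
    ext z
    rw [← ofScalarsSum, ofScalars_sum_eq, Fval]
    exact tsum_congr fun n => smul_eq_mul _ _
  rw [← hsum]
  exact (FormalMultilinearSeries.hasFPowerSeriesOnBall _
    (zero_lt_one.trans_le hrad)).hasFPowerSeriesAt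

lemma WeightOK.eq_zero_of_Fval_eq_zero {β : ℕ → ℝ} (hβ : WeightOK β) {x : Hs}
    (h : ∀ z ∈ ball (0 : ℂ) 1, Fval β x z = 0) : x = 0 := by
  have hp := (hβ.hasFPowerSeriesAt_Fval x).eq_zero_of_eventually
    (eventually_of_mem (ball_mem_nhds 0 one_pos) h)
  ext n
  have hn := (ofScalars_eq_zero ℂ n).mp (congrArg (· n) hp)
  simpa [(hβ.1 n).ne'] using hn

lemma Fval_single (β : ℕ → ℝ) (k : ℕ) :
    Fval β (lp.single 2 k 1 : Hs) = fun z : ℂ => z ^ k / (β k : ℂ) := by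
  ext z
  rw [Fval, tsum_eq_single k fun n hn => by simp [Pi.single_eq_of_ne hn]]
  simp [div_eq_inv_mul]

lemma Fval_zero (β : ℕ → ℝ) (x : ℕ → ℂ) : Fval β x 0 = x 0 / β 0 := by
  rw [Fval, tsum_eq_single 0 fun n hn => by simp [zero_pow hn]]
  simp

lemma Jseq_single_zero (w : ℂ) : Jseq w (lp.single 2 0 1 : Hs) = (lp.single 2 0 1 : Hs) := by
  ext n
  rcases eq_or_ne n 0 with rfl | hn
  · simp [Jseq]
  · simp [Jseq, Pi.single_eq_of_ne hn]

lemma eq_zero_of_Jseq_eq_zero {w : ℂ} (hw : w ≠ 0) {x : ℕ → ℂ} (h : Jseq w x = 0) :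
    x = 0 := by
  ext n
  simpa [Jseq, hw] using congrFun h n

namespace IsGWCO

variable {β : ℕ → ℝ} {m : ℕ} {ψ φ : ℂ → ℂ} {T : Hs →L[ℂ] Hs}

lemma apply_single_zero (hT : IsGWCO β m ψ φ T) (hβ : WeightOK β) (hm : 1 ≤ m) :
    T (lp.single 2 0 1) = 0 := by
  refine hβ.eq_zero_of_Fval_eq_zero fun z hz => ?_
  simp [hT _ z hz, Fval_single, hβ.2.1, iteratedDeriv_const, Nat.one_le_iff_ne_zero.mp hm]

lemma apply_single_coeff_zero (hT : IsGWCO β m ψ φ T) :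
    (T (lp.single 2 m 1) : ℕ → ℂ) 0 / β 0 = ψ 0 * (m.factorial / β m) := by
  rw [← Fval_zero, hT _ 0 (mem_ball_self one_pos), Fval_single]
  simp [div_eq_mul_inv, Nat.descFactorial_self]

end IsGWCO

theorem stmt8_general (β : ℕ → ℝ) (hβ : WeightOK β) (m : ℕ) (hm : 1 ≤ m)
    (w : ℂ) (hw : ‖w‖ = 1)
    (ψ φ : ℂ → ℂ)
    (T : Hs →L[ℂ] Hs) (hT : IsGWCO β m ψ φ T)
    (J : Hs → Hs) (hJ : ∀ (x : Hs) (n : ℕ), (J x : ℕ → ℂ) n = Jseq w (x : ℕ → ℂ) n)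
    (hsym : ∀ x : Hs, T x = J (ContinuousLinearMap.adjoint T (J x))) :
    ψ 0 = 0 := by
  set e₀ : Hs := lp.single 2 0 1
  have hw₀ : w ≠ 0 := by rintro rfl; simp at hw
  have hJe₀ : J e₀ = e₀ :=
    lp.ext <| funext fun n => (hJ e₀ n).trans (congrFun (Jseq_single_zero w) n)
  have hadj : ContinuousLinearMap.adjoint T e₀ = 0 := by
    refine lp.ext (eq_zero_of_Jseq_eq_zero hw₀ (funext fun n => ?_))
    rw [← hJ, ← hJe₀, ← hsym, hT.apply_single_zero hβ hm]
    rfl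
  have hcoeff : (T (lp.single 2 m 1) : ℕ → ℂ) 0 = 0 := by
    have h := lp.inner_single_left (𝕜 := ℂ) 0 (1 : ℂ) (T (lp.single 2 m 1))
    rw [← ContinuousLinearMap.adjoint_inner_left, hadj, inner_zero_left] at h
    simpa using h.symm
  have hval := hT.apply_single_coeff_zero
  rw [hcoeff, zero_div, eq_comm, mul_eq_zero] at hval
  exact hval.resolve_right <|
    div_ne_zero (Nat.cast_ne_zero.mpr m.factorial_ne_zero) (ofReal_ne_zero.mpr (hβ.1 m).ne')

/-- if `D_{m,ψ,φ}` is `J_w`-symmetric and `ψ ≢ 0`, then `ψ(0) = 0`. -/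
theorem stmt8 (β : ℕ → ℝ) (hβ : WeightOK β) (m : ℕ) (hm : 1 ≤ m)
    (w : ℂ) (hw : ‖w‖ = 1)
    (ψ φ : ℂ → ℂ) (hφ : SelfMapD φ) (hψa : AnalyticOnNhd ℂ ψ (ball 0 1))
    (hψ0 : ∃ z ∈ ball (0:ℂ) 1, ψ z ≠ 0)
    (T : Hs →L[ℂ] Hs) (hT : IsGWCO β m ψ φ T)
    (J : Hs → Hs) (hJ : ∀ (x : Hs) (n : ℕ), (J x : ℕ → ℂ) n = Jseq w (x : ℕ → ℂ) n)
    (hsym : ∀ x : Hs, T x = J (ContinuousLinearMap.adjoint T (J x))) :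
    ψ 0 = 0 :=
  stmt8_general β hβ m hm w hw ψ φ T hT J hJ hsym
end
end

section
/- Let m ≥ 1, a₁ ∈ 𝔻, a₂ ∈ ℂ, and define φ(z) = a₁ z and ψ(z) = (a₂/m!) z^m. If D_{m,ψ,φ} is bounded on H²(β), then it is J_w-symmetric: J_w D_{m,ψ,φ}* K_α = D_{m,ψ,φ} J_w K_α for all α ∈ 𝔻. -/
open Complex Metric
open scoped InnerProductSpace ComplexConjugate

noncomputable section

/-!
With `F(z) = Σ zⁿ / β(n)²` every kernel is a dilation, `K_α(z) = F(conj α · z)`. By the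
reproducing property, the left side evaluated at `γ` is `ψ(α) · (K_{w conj γ})^{(m)}(a₁ α)
= (a₂/m!) (conj w · γ α)^m · F^{(m)}(a₁ conj w · γ α)`, and the right side is the same expression
with `α` and `γ` exchanged. It is symmetric in `α` and `γ`, and an element of `H²(β)` is
determined by its values on the disc.
-/

open FormalMultilinearSeries

def taylorSeries (β : ℕ → ℝ) (x : ℕ → ℂ) : FormalMultilinearSeries ℂ ℂ ℂ :=
  ofScalars ℂ fun n => x n / (β n : ℂ)

def kernelProfile (β : ℕ → ℝ) : ℂ → ℂ := Fval β fun n => (β n : ℂ)⁻¹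

namespace WeightOK

variable {β : ℕ → ℝ}

theorem coe_ne_zero (hβ : WeightOK β) (n : ℕ) : (β n : ℂ) ≠ 0 :=
  Complex.ofReal_ne_zero.2 (hβ.1 n).ne'

theorem eventually_pow_le_s10 (hβ : WeightOK β) {t : ℝ} (ht0 : 0 ≤ t) (ht1 : t < 1) :
    ∀ᶠ n in Filter.atTop, t ^ n ≤ β n := by
  have hbdd : Filter.IsBoundedUnder (· ≥ ·) Filter.atTop
      fun n : ℕ => β n ^ ((1 : ℝ) / n) :=
    ⟨0, Filter.eventually_map.2 (.of_forall fun n => Real.rpow_nonneg (hβ.1 n).le _)⟩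
  filter_upwards [Filter.eventually_lt_of_lt_liminf (ht1.trans_le hβ.2.2) hbdd,
    Filter.eventually_ge_atTop 1] with n hn hn1
  calc t ^ n ≤ (β n ^ ((1 : ℝ) / n)) ^ n := pow_le_pow_left₀ ht0 hn.le n
    _ = β n := by
      rw [← Real.rpow_natCast, ← Real.rpow_mul (hβ.1 n).le, one_div,
        inv_mul_cancel₀ (by exact_mod_cast (by omega : n ≠ 0)), Real.rpow_one]

theorem one_le_radius_ofScalars_inv (hβ : WeightOK β) :
    1 ≤ (ofScalars ℂ fun n => (β n : ℂ)⁻¹).radius := by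
  refine ENNReal.le_of_forall_nnreal_lt fun r hr => ?_
  refine le_radius_of_eventually_le _ 1 ?_
  filter_upwards [hβ.eventually_pow_le_s10 r.coe_nonneg (by exact_mod_cast hr)] with n hn
  rw [ofScalars_norm, norm_inv, Complex.norm_real, Real.norm_of_nonneg (hβ.1 n).le,
    inv_mul_le_iff₀ (hβ.1 n), mul_one]
  exact hn

/-- Since `β(n) ≥ tⁿ` eventually for every `t < 1`, dividing by `β(n)` costs at most `t⁻ⁿ`. -/
theorem one_le_radius_taylorSeries (hβ : WeightOK β) {x : ℕ → ℂ}
    (hx : 1 ≤ (ofScalars ℂ x).radius) : 1 ≤ (taylorSeries β x).radius := by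
  refine ENNReal.le_of_forall_nnreal_lt fun r hr => ?_
  have hr1 : (r : ℝ) < 1 := by exact_mod_cast hr
  -- `t := (1 + r)/2` satisfies `r ≤ t² < 1`
  set t : NNReal := (1 + r) / 2
  have ht1 : (t : ℝ) < 1 := by simp only [t, NNReal.coe_div, NNReal.coe_add]; push_cast; linarith
  have hrt : (r : ℝ) ≤ t * t := by
    simp only [t, NNReal.coe_div, NNReal.coe_add]; push_cast; nlinarith
  obtain ⟨C, -, hC⟩ := (ofScalars ℂ x).norm_mul_pow_le_of_lt_radius
    ((show (t : ENNReal) < 1 by exact_mod_cast ht1).trans_le hx)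
  refine le_radius_of_eventually_le _ C ?_
  filter_upwards [hβ.eventually_pow_le_s10 t.coe_nonneg ht1] with n hn
  have hb := hβ.1 n
  have hxn : ‖x n‖ * (t : ℝ) ^ n ≤ C := by simpa only [ofScalars_norm] using hC n
  rw [taylorSeries, ofScalars_norm, norm_div, Complex.norm_real, Real.norm_of_nonneg hb.le]
  calc ‖x n‖ / β n * (r : ℝ) ^ n ≤ ‖x n‖ / β n * (t ^ n * t ^ n) := by
        rw [← mul_pow]; gcongr
    _ = ‖x n‖ * (t : ℝ) ^ n * (t ^ n / β n) := by ring
    _ ≤ C * 1 := mul_le_mul hxn ((div_le_one hb).2 hn) (by positivity)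
        ((by positivity : (0 : ℝ) ≤ ‖x n‖ * (t : ℝ) ^ n).trans hxn)
    _ = C := mul_one C

end WeightOK

theorem one_le_radius_ofScalars_lp (x : Hs) : 1 ≤ (ofScalars ℂ (x : ℕ → ℂ)).radius := by
  refine ENNReal.le_of_forall_nnreal_lt fun r hr => le_radius_of_bound _ ‖x‖ fun n => ?_
  rw [ofScalars_norm]
  exact mul_le_of_le_one_right (norm_nonneg _)
    (pow_le_one₀ r.coe_nonneg (by exact_mod_cast hr.le)) |>.trans
    (lp.norm_apply_le_norm two_ne_zero x n)

theorem hasFPowerSeriesOnBall_fval {β : ℕ → ℝ} {x : ℕ → ℂ} (hx : 1 ≤ (taylorSeries β x).radius) :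
    HasFPowerSeriesOnBall (Fval β x) (taylorSeries β x) 0 1 := by
  refine ⟨hx, zero_lt_one, fun {y} hy => ?_⟩
  have hsum := ((taylorSeries β x).hasFPowerSeriesOnBall
    (zero_lt_one.trans_le hx)).hasSum (Metric.eball_subset_eball hx hy)
  convert hsum using 1
  simp only [FormalMultilinearSeries.sum, Fval, taylorSeries, ofScalars_apply_eq, smul_eq_mul]

theorem analyticOnNhd_kernelProfile {β : ℕ → ℝ} (hβ : WeightOK β) :
    AnalyticOnNhd ℂ (kernelProfile β) (ball 0 1) := by
  have h := (hasFPowerSeriesOnBall_fval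
    (hβ.one_le_radius_taylorSeries hβ.one_le_radius_ofScalars_inv)).analyticOnNhd
  rwa [← ENNReal.ofReal_one, Metric.eball_ofReal] at h

theorem WeightOK.eq_of_eqOn_fval {β : ℕ → ℝ} (hβ : WeightOK β) {x y : Hs}
    (h : Set.EqOn (Fval β x) (Fval β y) (ball 0 1)) : x = y := by
  have hser : taylorSeries β x = taylorSeries β y :=
    (hasFPowerSeriesOnBall_fval (hβ.one_le_radius_taylorSeries (one_le_radius_ofScalars_lp x))
      ).hasFPowerSeriesAt.eq_formalMultilinearSeries_of_eventually
    (hasFPowerSeriesOnBall_fval (hβ.one_le_radius_taylorSeries (one_le_radius_ofScalars_lp y))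
      ).hasFPowerSeriesAt (Filter.eventually_of_mem (ball_mem_nhds 0 one_pos) h)
  ext n
  simpa [hβ.coe_ne_zero n] using congrFun (ofScalars_series_injective ℂ ℂ hser) n

theorem fval_kerSeq (β : ℕ → ℝ) (α z : ℂ) :
    Fval β (kerSeq β α) z = kernelProfile β (conj α * z) := by
  simp only [Fval, kerSeq, kernelProfile, mul_pow]
  exact tsum_congr fun n => by ring

theorem fval_Jseq (β : ℕ → ℝ) (w : ℂ) (x : ℕ → ℂ) (z : ℂ) :
    Fval β (Jseq w x) z = conj (Fval β x (w * conj z)) := by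
  simp only [Fval, Jseq, Complex.conj_tsum, map_mul, map_div₀, map_pow, Complex.conj_ofReal,
    Complex.conj_conj]
  exact tsum_congr fun n => by ring

theorem Jseq_kerSeq (β : ℕ → ℝ) (w α : ℂ) : Jseq w (kerSeq β α) = kerSeq β (w * conj α) := by
  funext n
  simp only [Jseq, kerSeq, map_div₀, map_pow, map_mul, Complex.conj_conj, Complex.conj_ofReal,
    mul_pow]
  ring

theorem inner_eq_fval_of_kerSeq {β : ℕ → ℝ} {γ : ℂ} {k : Hs} (hk : ⇑k = kerSeq β γ) (x : Hs) :
    ⟪k, x⟫_ℂ = Fval β x γ := by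
  rw [lp.inner_eq_tsum]
  refine tsum_congr fun n => ?_
  simp only [RCLike.inner_apply, hk, kerSeq, map_div₀, map_pow, Complex.conj_conj,
    Complex.conj_ofReal]
  ring

theorem iteratedDeriv_comp_const_mul_of_mapsTo {𝕜 : Type*} [NontriviallyNormedField 𝕜]
    {f : 𝕜 → 𝕜} {s : Set 𝕜} {n : ℕ} {c x : 𝕜} (hs : IsOpen s) (hf : ContDiffOn 𝕜 n f s)
    (hcs : Set.MapsTo (c * ·) s s) (hx : x ∈ s) :
    iteratedDeriv n (fun z => f (c * z)) x = c ^ n * iteratedDeriv n f (c * x) := by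
  rw [← iteratedDerivWithin_of_isOpen hs hx, ← iteratedDerivWithin_of_isOpen hs (hcs hx)]
  exact iteratedDerivWithin_comp_const_smul hx hs.uniqueDiffOn hf c hcs

theorem fval_apply_kerSeq_of_isGWCO {β : ℕ → ℝ} (hβ : WeightOK β) {m : ℕ} {ψ : ℂ → ℂ}
    {a₁ : ℂ} (ha₁ : a₁ ∈ ball (0 : ℂ) 1) {T : Hs →L[ℂ] Hs} (hT : IsGWCO β m ψ (a₁ * ·) T)
    {c : ℂ} (hc : ‖c‖ ≤ 1) {x : Hs} (hx : ⇑x = kerSeq β (conj c)) {α : ℂ}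
    (hα : α ∈ ball (0 : ℂ) 1) :
    Fval β (T x) α = ψ α * c ^ m * iteratedDeriv m (kernelProfile β) (c * (a₁ * α)) := by
  have hmaps : ∀ {u : ℂ}, ‖u‖ ≤ 1 → Set.MapsTo (u * ·) (ball (0 : ℂ) 1) (ball 0 1) :=
    fun hu z hz => by
      rw [mem_ball_zero_iff] at hz ⊢
      rw [norm_mul]
      exact (mul_le_of_le_one_left (norm_nonneg z) hu).trans_lt hz
  have hprofile : Fval β (kerSeq β (conj c)) = fun z => kernelProfile β (c * z) := by
    funext z
    rw [fval_kerSeq, Complex.conj_conj]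
  rw [hT x α hα, hx, hprofile]
  beta_reduce
  rw [iteratedDeriv_comp_const_mul_of_mapsTo isOpen_ball
    ((analyticOnNhd_kernelProfile hβ).contDiffOn isOpen_ball.uniqueDiffOn) (hmaps hc)
    (hmaps (mem_ball_zero_iff.1 ha₁).le hα)]
  ring

theorem stmt10_general (β : ℕ → ℝ) (hβ : WeightOK β) (m : ℕ)
    (w a₁ a₂ : ℂ) (hw : ‖w‖ = 1) (ha₁ : a₁ ∈ ball (0:ℂ) 1)
    (ψ φ : ℂ → ℂ) (hφdef : ∀ z, φ z = a₁ * z)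
    (hψdef : ∀ z, ψ z = a₂ / (m.factorial : ℂ) * z ^ m)
    (T : Hs →L[ℂ] Hs) (hT : IsGWCO β m ψ φ T)
    (J : Hs → Hs) (hJ : ∀ (x : Hs) (n : ℕ), (J x : ℕ → ℂ) n = Jseq w (x : ℕ → ℂ) n)
    (K : ℂ → Hs) (hK : ∀ α n, (K α : ℕ → ℂ) n = kerSeq β α n) :
    ∀ α ∈ ball (0:ℂ) 1,
      J (ContinuousLinearMap.adjoint T (K α)) = T (J (K α)) := by
  intro α hα
  obtain rfl : φ = (a₁ * ·) := funext hφdef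
  have hK' (γ : ℂ) : ⇑(K γ) = kerSeq β γ := funext (hK γ)
  have hJ' (x : Hs) : ⇑(J x) = Jseq w x := funext (hJ x)
  have hJK : J (K α) = K (w * conj α) := lp.ext (by rw [hJ', hK', hK', Jseq_kerSeq])
  have hT_kernel {γ δ : ℂ} (hγ : γ ∈ ball (0 : ℂ) 1) (hδ : δ ∈ ball (0 : ℂ) 1) :
      Fval β (T (K (w * conj γ))) δ = a₂ / (m.factorial : ℂ) * (conj w * γ * δ) ^ m *
        iteratedDeriv m (kernelProfile β) (a₁ * (conj w * γ * δ)) := by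
    have hc : ‖conj w * γ‖ ≤ 1 := by
      rw [norm_mul, RCLike.norm_conj, hw, one_mul]
      exact (mem_ball_zero_iff.1 hγ).le
    rw [fval_apply_kerSeq_of_isGWCO hβ ha₁ hT hc (by simp [hK']) hδ, hψdef]
    ring_nf
  refine hβ.eq_of_eqOn_fval fun γ hγ => ?_
  calc Fval β (J (ContinuousLinearMap.adjoint T (K α))) γ
      = Fval β (T (K (w * conj γ))) α := by
        rw [hJ', fval_Jseq, ← inner_eq_fval_of_kerSeq (hK' _),
          ContinuousLinearMap.adjoint_inner_right, inner_conj_symm,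
          inner_eq_fval_of_kerSeq (hK' α)]
    _ = Fval β (T (K (w * conj α))) γ := by
        rw [hT_kernel hγ hα, hT_kernel hα hγ, mul_right_comm (conj w)]
    _ = Fval β (T (J (K α))) γ := by rw [hJK]

/-- `φ(z) = a₁ z`, `ψ(z) = (a₂/m!) z^m` give a `J_w`-symmetric operator. -/
theorem stmt10 (β : ℕ → ℝ) (hβ : WeightOK β) (m : ℕ) (hm : 1 ≤ m)
    (w a₁ a₂ : ℂ) (hw : ‖w‖ = 1) (ha₁ : a₁ ∈ ball (0:ℂ) 1)
    (ψ φ : ℂ → ℂ) (hφdef : ∀ z, φ z = a₁ * z)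
    (hψdef : ∀ z, ψ z = a₂ / (m.factorial : ℂ) * z ^ m)
    (T : Hs →L[ℂ] Hs) (hT : IsGWCO β m ψ φ T)
    (J : Hs → Hs) (hJ : ∀ (x : Hs) (n : ℕ), (J x : ℕ → ℂ) n = Jseq w (x : ℕ → ℂ) n)
    (K : ℂ → Hs) (hK : ∀ α n, (K α : ℕ → ℂ) n = kerSeq β α n) :
    ∀ α ∈ ball (0:ℂ) 1,
      J (ContinuousLinearMap.adjoint T (K α)) = T (J (K α)) :=
  stmt10_general β hβ m w a₁ a₂ hw ha₁ ψ φ hφdef hψdef T hT J hJ K hK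
end
end

section
/- Let D_{m,ψ,φ} be bounded and J_w-symmetric on H²(β) with ψ not identically zero. If ψ^{(m)}(0) ∈ ℝ, φ'(0) ∈ ℝ, and conj(φ(0)) = conj(w) φ(0), then conj(ψ(w·conj(z))) = conj(w)^m ψ(z) and conj(φ(w·conj(z))) = conj(w) φ(z) for all z ∈ 𝔻, and consequently D_{m,ψ,φ} is Hermitian. -/
open Complex Metric
open scoped InnerProductSpace ComplexConjugate

noncomputable section

/-!
Write `M n j` for the matrix of `T` in the standard basis of `ℓ²`, and `b k n`, `f n` for the
Taylor coefficients of `ψ φᵏ` and `φ`. Since `D` sends `zʲ / β j` to `(j)ₘ / β j · ψ φ^(j-m)`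
(falling factorial), `β j M n j = β n (j)ₘ b (j-m) n`, while `J_w`-symmetry reads
`wⁿ M n j = wʲ M j n`; eliminating `M` leaves a symmetric relation among the `b`'s alone.

Say that `z` has degree `k` if `conj z = wᵏ z` (`IsTwistedReal w k z`). The hypotheses give
`b 0 m` and `f 1` degree `0` and `f 0` degree `-1`. The relation at `j = m` writes `b 0 (m+l)` as
a real multiple of `w^(-l) b 0 m φ(0)ˡ` (the kernel formula for `ψ`), so it has degree `l`. At
`j = m+1` it ties `b 1 (m+k)` to `b k (m+1)`, whose degree `1-k` follows by induction from
`b k m = b 0 m φ(0)ᵏ`; peeling `b 0 m f k` off `b 1 (m+k) = Σ b 0 (m+l) f (k-l)` then gives `f k`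
degree `k-1` by strong induction. Hence every `b k n` has degree `n-m-k`, which is exactly
`conj (M j n) = M n j`; the degrees of the coefficients of `ψ` and `φ` are the two functional
identities.
-/

open Filter Finset FormalMultilinearSeries

namespace WeightedHardy

theorem hasFPowerSeriesOnBall_ofScalars_of_hasSum {c : ℕ → ℂ} {g : ℂ → ℂ} {r : NNReal} (hr : 0 < r)
    (hc : ∀ z ∈ ball (0 : ℂ) r, HasSum (fun n => c n * z ^ n) (g z)) :
    HasFPowerSeriesOnBall g (ofScalars ℂ c) 0 r := by
  refine ⟨ENNReal.le_of_forall_nnreal_lt fun s hs => ?_, by exact_mod_cast hr, fun {y} hy => ?_⟩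
  · have hs' : ((s : ℝ) : ℂ) ∈ ball (0 : ℂ) r := by
      simpa [Real.norm_of_nonneg s.coe_nonneg] using hs
    refine (ofScalars ℂ c).le_radius_of_tendsto (l := 0) ?_
    simpa [ofScalars_norm, Real.norm_of_nonneg s.coe_nonneg] using
      (hc _ hs').summable.tendsto_atTop_zero.norm
  · rw [Metric.eball_coe] at hy
    simpa [ofScalars_apply_eq, mul_comm] using hc y (by simpa using hy)

theorem coeff_eq_of_hasSum_pow {c d : ℕ → ℂ} {g : ℂ → ℂ} {r : NNReal} (hr : 0 < r)
    (hc : ∀ z ∈ ball (0 : ℂ) r, HasSum (fun n => c n * z ^ n) (g z))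
    (hd : ∀ z ∈ ball (0 : ℂ) r, HasSum (fun n => d n * z ^ n) (g z)) : c = d :=
  ofScalars_series_injective ℂ ℂ <|
    (hasFPowerSeriesOnBall_ofScalars_of_hasSum hr hc).hasFPowerSeriesAt.eq_formalMultilinearSeries
      (hasFPowerSeriesOnBall_ofScalars_of_hasSum hr hd).hasFPowerSeriesAt

def taylorCoeff (g : ℂ → ℂ) (n : ℕ) : ℂ := (n.factorial : ℂ)⁻¹ * iteratedDeriv n g 0

theorem hasSum_taylorCoeff {g : ℂ → ℂ} {r : ℝ} (hg : DifferentiableOn ℂ g (ball 0 r)) {z : ℂ}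
    (hz : z ∈ ball (0 : ℂ) r) : HasSum (fun n => taylorCoeff g n * z ^ n) (g z) := by
  simpa [taylorCoeff, mul_comm, mul_left_comm] using Complex.hasSum_taylorSeries_on_ball hg hz

theorem taylorCoeff_mul {g h : ℂ → ℂ} {n : ℕ} (hg : ContDiffAt ℂ n g 0) (hh : ContDiffAt ℂ n h 0) :
    taylorCoeff (g * h) n = ∑ i ∈ range (n + 1), taylorCoeff g i * taylorCoeff h (n - i) := by
  rw [taylorCoeff, iteratedDeriv_mul hg hh, Finset.mul_sum]
  refine Finset.sum_congr rfl fun i hi => ?_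
  have hin : i ≤ n := Nat.lt_succ_iff.mp (Finset.mem_range.mp hi)
  have : (n.factorial : ℂ) ≠ 0 := Nat.cast_ne_zero.mpr n.factorial_ne_zero
  rw [Nat.cast_choose ℂ hin, taylorCoeff, taylorCoeff]
  field_simp

theorem taylorCoeff_mul_pow_succ {ψ φ : ℂ → ℂ} (hψ : AnalyticAt ℂ ψ 0) (hφ : AnalyticAt ℂ φ 0)
    (k n : ℕ) : taylorCoeff (ψ * φ ^ (k + 1)) n
      = ∑ i ∈ range (n + 1), taylorCoeff (ψ * φ ^ k) i * taylorCoeff φ (n - i) := by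
  rw [pow_succ, ← mul_assoc]
  exact taylorCoeff_mul (hψ.mul (hφ.pow k)).contDiffAt hφ.contDiffAt

theorem eventually_pow_le_weight {β : ℕ → ℝ} (hpos : ∀ n, 0 < β n)
    (hlim : 1 ≤ atTop.liminf (fun n : ℕ => β n ^ ((1 : ℝ) / n))) {r : ℝ} (hr0 : 0 < r)
    (hr1 : r < 1) : ∀ᶠ n in atTop, r ^ n ≤ β n := by
  have hbdd : IsBoundedUnder (· ≥ ·) atTop (fun n : ℕ => β n ^ ((1 : ℝ) / n)) :=
    ⟨0, eventually_map.mpr (.of_forall fun n => Real.rpow_nonneg (hpos n).le _)⟩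
  filter_upwards [eventually_lt_of_lt_liminf (hr1.trans_le hlim) hbdd,
    eventually_ge_atTop 1] with n hn hn1
  calc r ^ n ≤ (β n ^ ((1 : ℝ) / n)) ^ n := pow_le_pow_left₀ hr0.le hn.le n
    _ = β n := by
      rw [← Real.rpow_natCast, ← Real.rpow_mul (hpos n).le, one_div,
        inv_mul_cancel₀ (by positivity), Real.rpow_one]

theorem hasSum_Fval {β : ℕ → ℝ} (hpos : ∀ n, 0 < β n)
    (hlim : 1 ≤ atTop.liminf (fun n : ℕ => β n ^ ((1 : ℝ) / n))) (x : Hs) {z : ℂ}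
    (hz : z ∈ ball (0 : ℂ) 1) :
    HasSum (fun n => (x : ℕ → ℂ) n / β n * z ^ n) (Fval β (x : ℕ → ℂ) z) := by
  rw [mem_ball_zero_iff] at hz
  obtain ⟨r, hzr, hr1⟩ := exists_between hz
  have hr0 : 0 < r := (norm_nonneg z).trans_lt hzr
  have hgeo : Summable fun n : ℕ => ‖x‖ * (‖z‖ / r) ^ n :=
    (summable_geometric_of_lt_one (by positivity) ((div_lt_one hr0).mpr hzr)).mul_left _
  refine Summable.hasSum (.of_norm_bounded_eventually_nat hgeo ?_)
  filter_upwards [eventually_pow_le_weight hpos hlim hr0 hr1] with n hn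
  rw [norm_mul, norm_div, norm_pow, Complex.norm_real, Real.norm_of_nonneg (hpos n).le,
    div_pow, ← mul_div_right_comm, mul_div_assoc]
  have := hpos n
  gcongr
  exact lp.norm_apply_le_norm two_ne_zero x n

theorem Fval_single (β : ℕ → ℝ) (j : ℕ) :
    Fval β (lp.single 2 j (1 : ℂ) : ℕ → ℂ) = fun z => (β j : ℂ)⁻¹ * z ^ j := by
  funext z
  rw [Fval, tsum_eq_single j fun n hn => by simp [hn]]
  simp

open ContinuousLinearMap

def entry (T : Hs →L[ℂ] Hs) (n j : ℕ) : ℂ := (T (lp.single 2 j 1) : ℕ → ℂ) n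

theorem inner_single_one_left (n : ℕ) (y : Hs) :
    ⟪lp.single 2 n (1 : ℂ), y⟫_ℂ = (y : ℕ → ℂ) n := by
  simp [lp.inner_single_left]

theorem entry_adjoint (T : Hs →L[ℂ] Hs) (n j : ℕ) : entry (adjoint T) n j = conj (entry T j n) := by
  rw [entry, ← inner_single_one_left, adjoint_inner_right, ← inner_conj_symm,
    inner_single_one_left, entry]

theorem adjoint_eq_self_of_entry {T : Hs →L[ℂ] Hs} (h : ∀ n j, conj (entry T j n) = entry T n j) :
    adjoint T = T := by
  have hcol : ∀ j, adjoint T (lp.single 2 j 1) = T (lp.single 2 j 1) := fun j =>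
    lp.ext <| funext fun n => by rw [← entry, entry_adjoint, h, entry]
  ext x n
  rw [← inner_single_one_left, adjoint_inner_right, ← hcol, adjoint_inner_left,
    inner_single_one_left]

theorem pow_mul_entry_eq_of_symm {w : ℂ} (hw : w * conj w = 1) {T : Hs →L[ℂ] Hs} {J : Hs → Hs}
    (hJ : ∀ (x : Hs) (n : ℕ), (J x : ℕ → ℂ) n = Jseq w (x : ℕ → ℂ) n)
    (hsym : ∀ x : Hs, T x = J (adjoint T (J x))) (n j : ℕ) :
    w ^ n * entry T n j = w ^ j * entry T j n := by
  have hJe : J (lp.single 2 j 1) = conj w ^ j • lp.single 2 j 1 :=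
    lp.ext <| funext fun n => by
      rw [hJ, Jseq, lp.coeFn_smul, Pi.smul_apply]
      by_cases h : n = j <;> simp [h]
  have : entry T n j = w ^ j * conj w ^ n * entry T j n := by
    rw [entry, hsym, hJ, Jseq, hJe, map_smul, lp.coeFn_smul, Pi.smul_apply, ← entry,
      entry_adjoint]
    simp only [smul_eq_mul, map_mul, map_pow, Complex.conj_conj]
    ring
  rw [this, ← mul_assoc, ← mul_assoc, mul_comm (w ^ n), mul_assoc (w ^ j), ← mul_pow, hw,
    one_pow, mul_one]

theorem weight_mul_entry_of_isGWCO {β : ℕ → ℝ} (hpos : ∀ n, 0 < β n)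
    (hlim : 1 ≤ atTop.liminf (fun n : ℕ => β n ^ ((1 : ℝ) / n))) {m : ℕ} {ψ φ : ℂ → ℂ}
    (hψ : DifferentiableOn ℂ ψ (ball 0 1)) (hφ : DifferentiableOn ℂ φ (ball 0 1))
    {T : Hs →L[ℂ] Hs} (hT : IsGWCO β m ψ φ T) (n j : ℕ) :
    β j * entry T n j = β n * j.descFactorial m * taylorCoeff (ψ * φ ^ (j - m)) n := by
  have hβ : ∀ n, (β n : ℂ) ≠ 0 := fun n => Complex.ofReal_ne_zero.mpr (hpos n).ne'
  have hcoef := coeff_eq_of_hasSum_pow (r := 1) one_pos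
    (c := fun n => entry T n j / β n)
    (d := fun n => j.descFactorial m / β j * taylorCoeff (ψ * φ ^ (j - m)) n)
    (g := fun z => j.descFactorial m / β j * (ψ z * φ z ^ (j - m)))
    (fun z hz => by
      rw [NNReal.coe_one] at hz
      convert hasSum_Fval hpos hlim (T (lp.single 2 j 1)) hz using 1
      · rfl
      rw [hT _ z hz, Fval_single, iteratedDeriv_const_mul_field, iteratedDeriv_pow]
      ring)
    (fun z hz => by
      rw [NNReal.coe_one] at hz
      simpa only [mul_assoc, Pi.mul_apply, Pi.pow_apply] using
        (hasSum_taylorCoeff (hψ.mul (hφ.pow _)) hz).mul_left (j.descFactorial m / β j : ℂ))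
  have := congrFun hcoef n
  field_simp [hβ] at this
  linear_combination this

/-- If `w = ω ^ 2` with `‖ω‖ = 1`, this says that `z * ω ^ k` is real. -/
def IsTwistedReal (w : ℂ) (k : ℤ) (z : ℂ) : Prop := conj z = w ^ k * z

namespace IsTwistedReal

variable {w : ℂ} {k l : ℤ} {x y : ℂ}

theorem zero : IsTwistedReal w k 0 := by simp [IsTwistedReal]

theorem of_conj_eq (h : conj x = x) : IsTwistedReal w 0 x := by simp [IsTwistedReal, h]

theorem ofReal (r : ℝ) : IsTwistedReal w 0 r := of_conj_eq (Complex.conj_ofReal r)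

theorem natCast (n : ℕ) : IsTwistedReal w 0 n := of_conj_eq (map_natCast _ n)

theorem of_exp_eq (h : IsTwistedReal w k x) (hkl : k = l) : IsTwistedReal w l x := hkl ▸ h

theorem add (hx : IsTwistedReal w k x) (hy : IsTwistedReal w k y) :
    IsTwistedReal w k (x + y) := by
  rw [IsTwistedReal, map_add, hx, hy, mul_add]

theorem sub (hx : IsTwistedReal w k x) (hy : IsTwistedReal w k y) :
    IsTwistedReal w k (x - y) := by
  rw [IsTwistedReal, map_sub, hx, hy, mul_sub]

theorem sum {ι : Type*} {s : Finset ι} {f : ι → ℂ} (h : ∀ i ∈ s, IsTwistedReal w k (f i)) :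
    IsTwistedReal w k (∑ i ∈ s, f i) := by
  rw [IsTwistedReal, map_sum, Finset.mul_sum]
  exact Finset.sum_congr rfl h

theorem mul (hw : w ≠ 0) (hx : IsTwistedReal w k x) (hy : IsTwistedReal w l y) :
    IsTwistedReal w (k + l) (x * y) := by
  rw [IsTwistedReal, map_mul, hx, hy, zpow_add₀ hw]
  ring

theorem pow (hw : w ≠ 0) (hx : IsTwistedReal w k x) (n : ℕ) :
    IsTwistedReal w (n * k) (x ^ n) := by
  induction n with
  | zero => simpa using of_conj_eq (map_one _)
  | succ n ih => exact (ih.mul hw hx).of_exp_eq (by push_cast; ring)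

theorem of_mul_left (hw : w ≠ 0) (hx0 : x ≠ 0) (hx : IsTwistedReal w k x)
    (hxy : IsTwistedReal w l (x * y)) : IsTwistedReal w (l - k) y := by
  rw [IsTwistedReal, map_mul, hx, zpow_sub₀ hw] at *
  have hwk : w ^ k ≠ 0 := zpow_ne_zero k hw
  apply mul_left_cancel₀ (mul_ne_zero hwk hx0)
  field_simp at hxy ⊢
  linear_combination hxy

theorem self_pow (hw : w ≠ 0) (hwc : conj w = w⁻¹) (n : ℕ) :
    IsTwistedReal w (-2 * n) (w ^ n) := by
  rw [IsTwistedReal, map_pow, hwc, ← zpow_natCast, ← zpow_natCast, ← zpow_add₀ hw, inv_zpow']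
  ring_nf

end IsTwistedReal

/-- The relations satisfied by the Taylor coefficients `b k n` of `ψ φᵏ` and `f n` of `φ`:
`symm` is `wⁿ M n j = wʲ M j n` after substituting `β j M n j = β n (j)ₘ b (j-m) n`. -/
structure SymmCoeffs (w : ℂ) (β : ℕ → ℝ) (m : ℕ) (b : ℕ → ℕ → ℂ) (f : ℕ → ℂ) : Prop where
  w_ne_zero : w ≠ 0
  weight_ne_zero : ∀ n, β n ≠ 0
  succ_eq : ∀ k n, b (k + 1) n = ∑ i ∈ range (n + 1), b k i * f (n - i)
  symm : ∀ n j, w ^ n * (β n : ℂ) ^ 2 * j.descFactorial m * b (j - m) n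
    = w ^ j * (β j : ℂ) ^ 2 * n.descFactorial m * b (n - m) j

namespace SymmCoeffs

variable {w : ℂ} {β : ℕ → ℝ} {m : ℕ} {b : ℕ → ℕ → ℂ} {f : ℕ → ℂ}

theorem of_matrix (hw : w ≠ 0) (hβ : ∀ n, β n ≠ 0)
    (hsucc : ∀ k n, b (k + 1) n = ∑ i ∈ range (n + 1), b k i * f (n - i))
    {e : ℕ → ℕ → ℂ} (he : ∀ n j, w ^ n * e n j = w ^ j * e j n)
    (hβe : ∀ n j, β j * e n j = β n * j.descFactorial m * b (j - m) n) :
    SymmCoeffs w β m b f where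
  w_ne_zero := hw
  weight_ne_zero := hβ
  succ_eq := hsucc
  symm n j := by
    linear_combination
      (β n * β j : ℂ) * he n j - (w ^ n * β n) * hβe n j + (w ^ j * β j) * hβe j n

theorem factor_ne_zero (h : SymmCoeffs w β m b f) (n : ℕ) {d : ℕ} (hd : d ≠ 0) :
    w ^ n * (β n : ℂ) ^ 2 * d ≠ 0 := by
  simp [h.w_ne_zero, h.weight_ne_zero, hd]

theorem eq_zero_of_lt (h : SymmCoeffs w β m b f) {k n : ℕ} (hn : n < m) : b k n = 0 := by
  have e := h.symm n (m + k)
  rw [Nat.add_sub_cancel_left, Nat.descFactorial_eq_zero_iff_lt.mpr hn, Nat.cast_zero,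
    mul_zero, zero_mul] at e
  exact (mul_eq_zero.mp e).resolve_left
    (h.factor_ne_zero n (by simp [Nat.descFactorial_eq_zero_iff_lt]))

theorem apply_order (h : SymmCoeffs w β m b f) (k : ℕ) : b k m = b 0 m * f 0 ^ k := by
  induction k with
  | zero => simp
  | succ k ih =>
    rw [h.succ_eq, sum_range_succ, sum_eq_zero fun i hi => by
      rw [h.eq_zero_of_lt (mem_range.mp hi), zero_mul], Nat.sub_self, ih]
    ring

theorem apply_order_succ (h : SymmCoeffs w β m b f) (k : ℕ) :
    b (k + 1) (m + 1) = b 0 m * f 0 ^ k * f 1 + b k (m + 1) * f 0 := by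
  rw [h.succ_eq, sum_range_succ, sum_range_succ, sum_eq_zero fun i hi => by
      rw [h.eq_zero_of_lt (mem_range.mp hi), zero_mul], h.apply_order, Nat.sub_self,
    Nat.add_sub_cancel_left, zero_add]

theorem one_apply_order_add (h : SymmCoeffs w β m b f) (k : ℕ) :
    b 1 (m + k) = ∑ l ∈ range (k + 1), b 0 (m + l) * f (k - l) := by
  rw [h.succ_eq, add_assoc, sum_range_add, sum_eq_zero fun i hi => by
      rw [h.eq_zero_of_lt (mem_range.mp hi), zero_mul], zero_add]
  refine sum_congr rfl fun l _ => ?_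
  rw [Nat.add_sub_add_left]

theorem order_ne_zero (h : SymmCoeffs w β m b f) (hb : ∃ n, b 0 n ≠ 0) : b 0 m ≠ 0 := by
  intro hbm
  obtain ⟨n, hn⟩ := hb
  rcases lt_or_ge n m with hnm | hnm
  · exact hn (h.eq_zero_of_lt hnm)
  obtain ⟨l, rfl⟩ := Nat.exists_eq_add_of_le hnm
  have e := h.symm (m + l) m
  rw [Nat.sub_self, Nat.add_sub_cancel_left, h.apply_order, hbm, zero_mul, mul_zero] at e
  exact hn ((mul_eq_zero.mp e).resolve_left
    (h.factor_ne_zero _ (Nat.descFactorial_self m ▸ m.factorial_ne_zero)))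

theorem isTwistedReal_factor (h : SymmCoeffs w β m b f) (hwc : conj w = w⁻¹) (n d : ℕ) :
    IsTwistedReal w (-2 * n) (w ^ n * (β n : ℂ) ^ 2 * d) :=
  (((IsTwistedReal.self_pow h.w_ne_zero hwc n).mul h.w_ne_zero
    ((IsTwistedReal.ofReal (β n)).pow h.w_ne_zero 2)).mul h.w_ne_zero
    (IsTwistedReal.natCast d)).of_exp_eq (by ring)

theorem isTwistedReal_of_symm (h : SymmCoeffs w β m b f) (hwc : conj w = w⁻¹) {n j : ℕ}
    (hj : m ≤ j) {e : ℤ} (hb : IsTwistedReal w e (b (n - m) j)) :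
    IsTwistedReal w (e + 2 * n - 2 * j) (b (j - m) n) := by
  have hrhs := (h.isTwistedReal_factor hwc j (n.descFactorial m)).mul h.w_ne_zero hb
  rw [← h.symm] at hrhs
  exact (IsTwistedReal.of_mul_left h.w_ne_zero
    (h.factor_ne_zero n (by simp [Nat.descFactorial_eq_zero_iff_lt, hj]))
    (h.isTwistedReal_factor hwc n _) hrhs).of_exp_eq (by ring)

theorem isTwistedReal_zero_apply (h : SymmCoeffs w β m b f) (hwc : conj w = w⁻¹)
    (hbm : conj (b 0 m) = b 0 m) (hf0 : IsTwistedReal w (-1) (f 0)) (n : ℕ) :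
    IsTwistedReal w (n - m) (b 0 n) := by
  rcases lt_or_ge n m with hnm | hnm
  · rw [h.eq_zero_of_lt hnm]; exact .zero
  obtain ⟨l, rfl⟩ := Nat.exists_eq_add_of_le hnm
  have hb : IsTwistedReal w (-l) (b (m + l - m) m) := by
    rw [Nat.add_sub_cancel_left, h.apply_order]
    exact ((IsTwistedReal.of_conj_eq hbm).mul h.w_ne_zero (hf0.pow h.w_ne_zero l)).of_exp_eq
      (by ring)
  simpa using (h.isTwistedReal_of_symm hwc le_rfl hb).of_exp_eq (by push_cast; ring)

theorem isTwistedReal_apply_order_succ (h : SymmCoeffs w β m b f) (hwc : conj w = w⁻¹)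
    (hbm : conj (b 0 m) = b 0 m) (hf0 : IsTwistedReal w (-1) (f 0))
    (hf1 : conj (f 1) = f 1) (k : ℕ) : IsTwistedReal w (1 - k) (b k (m + 1)) := by
  induction k with
  | zero => simpa using h.isTwistedReal_zero_apply hwc hbm hf0 (m + 1)
  | succ k ih =>
    have hw := h.w_ne_zero
    rw [h.apply_order_succ]
    refine .add ?_ ?_
    · exact (((IsTwistedReal.of_conj_eq hbm).mul hw (hf0.pow hw k)).mul hw
        (IsTwistedReal.of_conj_eq hf1)).of_exp_eq (by push_cast; ring)
    · exact (ih.mul hw hf0).of_exp_eq (by push_cast; ring)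

theorem isTwistedReal_one_apply_order_add (h : SymmCoeffs w β m b f) (hwc : conj w = w⁻¹)
    (hbm : conj (b 0 m) = b 0 m) (hf0 : IsTwistedReal w (-1) (f 0))
    (hf1 : conj (f 1) = f 1) (k : ℕ) : IsTwistedReal w (k - 1) (b 1 (m + k)) := by
  have hb : IsTwistedReal w (1 - k) (b (m + k - m) (m + 1)) := by
    simpa using h.isTwistedReal_apply_order_succ hwc hbm hf0 hf1 k
  simpa using (h.isTwistedReal_of_symm hwc (by omega) hb).of_exp_eq (by push_cast; ring)

theorem isTwistedReal_f (h : SymmCoeffs w β m b f) (hwc : conj w = w⁻¹)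
    (hbm : conj (b 0 m) = b 0 m) (hbm0 : b 0 m ≠ 0) (hf0 : IsTwistedReal w (-1) (f 0))
    (hf1 : conj (f 1) = f 1) (k : ℕ) : IsTwistedReal w (k - 1) (f k) := by
  induction k using Nat.strong_induction_on with
  | _ k ih =>
  have hw := h.w_ne_zero
  have htail : IsTwistedReal w (k - 1)
      (∑ l ∈ range k, b 0 (m + (l + 1)) * f (k - (l + 1))) :=
    .sum fun l hl => ((h.isTwistedReal_zero_apply hwc hbm hf0 _).mul hw
      (ih _ (by simp at hl; omega))).of_exp_eq (by simp at hl; push_cast [Nat.cast_sub hl]; ring)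
  have hsplit : b 1 (m + k) - ∑ l ∈ range k, b 0 (m + (l + 1)) * f (k - (l + 1))
      = b 0 m * f k := by
    rw [h.one_apply_order_add, sum_range_succ']
    simp
  have hlead := (h.isTwistedReal_one_apply_order_add hwc hbm hf0 hf1 k).sub htail
  rw [hsplit] at hlead
  simpa using IsTwistedReal.of_mul_left hw hbm0 (.of_conj_eq hbm) hlead

theorem isTwistedReal_apply (h : SymmCoeffs w β m b f) (hwc : conj w = w⁻¹)
    (hbm : conj (b 0 m) = b 0 m) (hbm0 : b 0 m ≠ 0) (hf0 : IsTwistedReal w (-1) (f 0))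
    (hf1 : conj (f 1) = f 1) (k n : ℕ) : IsTwistedReal w (n - m - k) (b k n) := by
  induction k generalizing n with
  | zero => simpa using h.isTwistedReal_zero_apply hwc hbm hf0 n
  | succ k ih =>
    rw [h.succ_eq]
    exact .sum fun i hi => ((ih i).mul h.w_ne_zero
      (h.isTwistedReal_f hwc hbm hbm0 hf0 hf1 _)).of_exp_eq
        (by simp at hi; push_cast [Nat.cast_sub hi]; ring)

theorem conj_matrix_eq (h : SymmCoeffs w β m b f) (hwc : conj w = w⁻¹)
    (hbm : conj (b 0 m) = b 0 m) (hbm0 : b 0 m ≠ 0) (hf0 : IsTwistedReal w (-1) (f 0))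
    (hf1 : conj (f 1) = f 1) {e : ℕ → ℕ → ℂ} (he : ∀ n j, w ^ n * e n j = w ^ j * e j n)
    (hβe : ∀ n j, β j * e n j = β n * j.descFactorial m * b (j - m) n) (n j : ℕ) :
    conj (e n j) = e j n := by
  have hw := h.w_ne_zero
  have hβj : (β j : ℂ) ≠ 0 := Complex.ofReal_ne_zero.mpr (h.weight_ne_zero j)
  have htw : IsTwistedReal w (n - j) (e n j) := by
    rcases lt_or_ge j m with hjm | hjm
    · have : e n j = 0 := by
        simpa [Nat.descFactorial_eq_zero_iff_lt.mpr hjm, hβj] using hβe n j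
      rw [this]; exact .zero
    have hrhs := ((IsTwistedReal.ofReal (β n)).mul hw
      (IsTwistedReal.natCast (j.descFactorial m))).mul hw
      (h.isTwistedReal_apply hwc hbm hbm0 hf0 hf1 (j - m) n)
    rw [← hβe] at hrhs
    exact (IsTwistedReal.of_mul_left hw hβj (.ofReal _) hrhs).of_exp_eq
      (by push_cast [Nat.cast_sub hjm]; ring)
  rw [htw, zpow_sub₀ hw, zpow_natCast, zpow_natCast, div_mul_eq_mul_div, he,
    mul_div_cancel_left₀ _ (pow_ne_zero j hw)]

end SymmCoeffs

theorem conj_apply_mul_conj_eq {g : ℂ → ℂ} (hg : DifferentiableOn ℂ g (ball 0 1)) {w : ℂ}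
    (hw : ‖w‖ = 1) {p : ℕ} (hcoef : ∀ n : ℕ, IsTwistedReal w (n - p) (taylorCoeff g n)) :
    ∀ z ∈ ball (0 : ℂ) 1, conj (g (w * conj z)) = conj w ^ p * g z := by
  intro z hz
  have hw0 : w ≠ 0 := by rintro rfl; simp at hw
  have hwc : conj w = w⁻¹ := (Complex.inv_eq_conj hw).symm
  have hz' : w * conj z ∈ ball (0 : ℂ) 1 := by simpa [hw] using hz
  have hterm : ∀ n, conj (taylorCoeff g n * (w * conj z) ^ n)
      = conj w ^ p * (taylorCoeff g n * z ^ n) := fun n => by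
    have hn : conj (taylorCoeff g n) = w ^ ((n : ℤ) - p) * taylorCoeff g n := hcoef n
    simp only [map_mul, map_pow, Complex.conj_conj, hn, hwc, zpow_sub₀ hw0, zpow_natCast,
      mul_pow, inv_pow]
    field_simp
  refine (Complex.hasSum_conj'.mpr (hasSum_taylorCoeff hg hz')).unique ?_
  simpa only [hterm] using (hasSum_taylorCoeff hg hz).mul_left (conj w ^ p)

theorem conj_taylorCoeff {g : ℂ → ℂ} {n : ℕ} (h : (iteratedDeriv n g 0).im = 0) :
    conj (taylorCoeff g n) = taylorCoeff g n := by
  rw [taylorCoeff, map_mul, map_inv₀, map_natCast, Complex.conj_eq_iff_im.mpr h]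

theorem exists_taylorCoeff_ne_zero {g : ℂ → ℂ} (hg : DifferentiableOn ℂ g (ball 0 1))
    (h : ∃ z ∈ ball (0 : ℂ) 1, g z ≠ 0) : ∃ n, taylorCoeff g n ≠ 0 := by
  by_contra! hzero
  obtain ⟨z, hz, hgz⟩ := h
  exact hgz ((hasSum_taylorCoeff hg hz).unique (by simp [hzero]))

end WeightedHardy

open WeightedHardy

theorem stmt16_general (β : ℕ → ℝ) (hβ : WeightOK β) (m : ℕ)
    (w : ℂ) (hw : ‖w‖ = 1)
    (ψ φ : ℂ → ℂ) (hφ : SelfMapD φ) (hψa : AnalyticOnNhd ℂ ψ (ball 0 1))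
    (hψ0 : ∃ z ∈ ball (0:ℂ) 1, ψ z ≠ 0)
    (T : Hs →L[ℂ] Hs) (hT : IsGWCO β m ψ φ T)
    (J : Hs → Hs) (hJ : ∀ (x : Hs) (n : ℕ), (J x : ℕ → ℂ) n = Jseq w (x : ℕ → ℂ) n)
    (hsym : ∀ x : Hs, T x = J (ContinuousLinearMap.adjoint T (J x)))
    (hψm : (iteratedDeriv m ψ 0).im = 0) (hφ' : (deriv φ 0).im = 0)
    (hφ0 : conj (φ 0) = conj w * φ 0) :
    (∀ z ∈ ball (0:ℂ) 1, conj (ψ (w * conj z)) = (conj w) ^ m * ψ z) ∧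
    (∀ z ∈ ball (0:ℂ) 1, conj (φ (w * conj z)) = conj w * φ z) ∧
    ContinuousLinearMap.adjoint T = T := by
  obtain ⟨hpos, -, hlim⟩ := hβ
  have hw0 : w ≠ 0 := by rintro rfl; simp at hw
  have hwc : conj w = w⁻¹ := (Complex.inv_eq_conj hw).symm
  have hψd := hψa.differentiableOn
  have hφd := hφ.1.differentiableOn
  have he := pow_mul_entry_eq_of_symm (by rw [hwc, mul_inv_cancel₀ hw0]) hJ hsym
  have hβe := weight_mul_entry_of_isGWCO hpos hlim hψd hφd hT
  have hS : SymmCoeffs w β m (fun k => taylorCoeff (ψ * φ ^ k)) (taylorCoeff φ) :=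
    .of_matrix hw0 (fun n => (hpos n).ne')
      (taylorCoeff_mul_pow_succ (hψa 0 (mem_ball_self one_pos)) (hφ.1 0 (mem_ball_self one_pos)))
      he hβe
  have hb0 : taylorCoeff (ψ * φ ^ 0) = taylorCoeff ψ := by rw [pow_zero, mul_one]
  have hbm : conj (taylorCoeff (ψ * φ ^ 0) m) = taylorCoeff (ψ * φ ^ 0) m := by
    rw [hb0, conj_taylorCoeff hψm]
  have hbm0 : taylorCoeff (ψ * φ ^ 0) m ≠ 0 :=
    hS.order_ne_zero (hb0 ▸ exists_taylorCoeff_ne_zero hψd hψ0)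
  have hf0 : IsTwistedReal w (-1) (taylorCoeff φ 0) := by
    simpa [IsTwistedReal, taylorCoeff, hwc] using hφ0
  have hf1 : conj (taylorCoeff φ 1) = taylorCoeff φ 1 :=
    conj_taylorCoeff (by rwa [iteratedDeriv_one])
  refine ⟨conj_apply_mul_conj_eq hψd hw fun n => ?_, ?_,
    adjoint_eq_self_of_entry fun n j => hS.conj_matrix_eq hwc hbm hbm0 hf0 hf1 he hβe j n⟩
  · simpa [hb0] using hS.isTwistedReal_zero_apply hwc hbm hf0 n
  · simpa using conj_apply_mul_conj_eq (p := 1) hφd hw fun n => by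
      simpa using hS.isTwistedReal_f hwc hbm hbm0 hf0 hf1 n

/-- if a `J_w`-symmetric `D_{m,ψ,φ}` has `ψ^{(m)}(0), φ'(0) ∈ ℝ` and
`conj φ(0) = conj w · φ(0)`, then `conj(ψ(w conj z)) = conj(w)^m ψ(z)` and
`conj(φ(w conj z)) = conj w · φ(z)` on `𝔻`, and `D_{m,ψ,φ}` is Hermitian. -/
theorem stmt16 (β : ℕ → ℝ) (hβ : WeightOK β) (m : ℕ) (hm : 1 ≤ m)
    (w : ℂ) (hw : ‖w‖ = 1)
    (ψ φ : ℂ → ℂ) (hφ : SelfMapD φ) (hψa : AnalyticOnNhd ℂ ψ (ball 0 1))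
    (hψ0 : ∃ z ∈ ball (0:ℂ) 1, ψ z ≠ 0)
    (T : Hs →L[ℂ] Hs) (hT : IsGWCO β m ψ φ T)
    (J : Hs → Hs) (hJ : ∀ (x : Hs) (n : ℕ), (J x : ℕ → ℂ) n = Jseq w (x : ℕ → ℂ) n)
    (hsym : ∀ x : Hs, T x = J (ContinuousLinearMap.adjoint T (J x)))
    (hψm : (iteratedDeriv m ψ 0).im = 0) (hφ' : (deriv φ 0).im = 0)
    (hφ0 : conj (φ 0) = conj w * φ 0) :
    (∀ z ∈ ball (0:ℂ) 1, conj (ψ (w * conj z)) = (conj w) ^ m * ψ z) ∧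
    (∀ z ∈ ball (0:ℂ) 1, conj (φ (w * conj z)) = conj w * φ z) ∧
    ContinuousLinearMap.adjoint T = T :=
  stmt16_general β hβ m w hw ψ φ hφ hψa hψ0 T hT J hJ hsym hψm hφ' hφ0
end
end
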